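/- arXiv:1206.2767 — 2 statements merged into one kernel-verified Lean document; each statement's English description precedes it below -/
import Mathlib

section
/- Let G be a profinite group and M a finite discrete G-module admitting a G-composition series in which every composition factor is isomorphic to Z/ℓZ with trivial G-action. If G can be topologically generated by d elements, then the first continuous cohomology group H^1(G, M) is finite of order at most |M|^d. -/
noncomputable section

open scoped TensorProduct


section ContinuousCohomology

variable (G : Type*) [Monoid G] (M : Type*) [AddCommGroup M] [DistribMulAction G M]
  [TopologicalSpace M] [IsTopologicalAddGroup M]

/-- The inhomogeneous cochain differential. -/
def cochainD (n : ℕ) : ((Fin n → G) → M) →+ ((Fin (n + 1) → G) → M) where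
  toFun f := fun x =>
    x 0 • f (fun i => x i.succ) +
      ∑ j : Fin (n + 1), (-1 : ℤ) ^ ((j : ℕ) + 1) • f (Fin.contractNth j (· * ·) x)
  map_zero' := by
    ext x
    simp
  map_add' f g := by
    ext x
    simp only [Pi.add_apply, smul_add, Finset.sum_add_distrib]
    abel

variable [TopologicalSpace G]

/-- Continuous inhomogeneous `n`-cochains. -/
def contCochains (n : ℕ) : AddSubgroup ((Fin n → G) → M) where
  carrier := {f | Continuous f}
  zero_mem' := continuous_const
  add_mem' hf hg := hf.add hg
  neg_mem' hf := hf.neg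

/-- Continuous `n`-cocycles. -/
def contCocycles (n : ℕ) : AddSubgroup ((Fin n → G) → M) :=
  contCochains G M n ⊓ (cochainD G M n).ker

/-- Continuous `n`-coboundaries. -/
def contCoboundaries : (n : ℕ) → AddSubgroup ((Fin n → G) → M)
  | 0 => ⊥
  | (n + 1) => (contCochains G M n).map (cochainD G M n)

/-- Continuous group cohomology `H^n(G, M)` of a topological group `G` with coefficients
in a topological `G`-module `M` (discrete in the applications below). -/
abbrev contH (n : ℕ) : Type _ :=
  contCocycles G M n ⧸ (contCoboundaries G M n).addSubgroupOf (contCocycles G M n)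

end ContinuousCohomology

/-- A discrete topological additive group is a topological additive group. -/
instance (priority := 10) discreteTopologicalAddGroup (N : Type*) [AddGroup N]
    [TopologicalSpace N] [DiscreteTopology N] : IsTopologicalAddGroup N where
  continuous_add := continuous_of_discreteTopology
  continuous_neg := continuous_of_discreteTopology



set_option linter.unusedSectionVars false

section Aux

variable {G : Type} [Group G] [TopologicalSpace G] [IsTopologicalGroup G]
  {M : Type} [AddCommGroup M] [DistribMulAction G M]
  [TopologicalSpace M] [IsTopologicalAddGroup M]

lemma aux_cocycle_rel (f : (Fin 1 → G) → M) (hf : cochainD G M 1 f = 0) (g h : G) :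
    f (fun _ => g * h) = g • f (fun _ => h) + f (fun _ => g) := by
  have hx := congrFun hf ![g, h]
  have e1 : Fin.contractNth (0 : Fin 2) (· * ·) ![g, h] = fun _ => g * h := by
    funext i; fin_cases i; simp [Fin.contractNth]
  have e2 : Fin.contractNth (1 : Fin 2) (· * ·) ![g, h] = fun _ => g := by
    funext i; fin_cases i; simp [Fin.contractNth]
  simp [cochainD, Fin.sum_univ_succ, e1, e2] at hx
  have h2 : (g • f fun _ => h) + (f fun _ => g) - f (fun _ => g * h) = 0 := by
    rw [← hx]; abel
  exact (sub_eq_zero.mp h2).symm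

lemma aux_cocycle_one (f : (Fin 1 → G) → M) (hf : cochainD G M 1 f = 0) :
    f (fun _ => (1 : G)) = 0 := by
  have := aux_cocycle_rel f hf 1 1
  simp only [one_mul, one_smul] at this
  exact (add_eq_left).mp this.symm

lemma aux_cocycle_vanish [T1Space M] (S : Finset G)
    (hS : (Subgroup.closure (S : Set G)).topologicalClosure = ⊤)
    (f : (Fin 1 → G) → M) (hfc : Continuous f) (hfd : cochainD G M 1 f = 0)
    (hS0 : ∀ s ∈ S, f (fun _ => s) = 0) : f = 0 := by
  let K : Subgroup G :=
    { carrier := {g : G | f (fun _ => g) = 0}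
      one_mem' := aux_cocycle_one f hfd
      mul_mem' := fun {a b} ha hb => by
        have := aux_cocycle_rel f hfd a b
        simp only [Set.mem_setOf_eq] at ha hb ⊢
        rw [this, ha, hb, smul_zero, add_zero]
      inv_mem' := fun {a} ha => by
        have := aux_cocycle_rel f hfd a⁻¹ a
        simp only [Set.mem_setOf_eq] at ha ⊢
        rw [inv_mul_cancel, aux_cocycle_one f hfd, ha, smul_zero, zero_add] at this
        exact this.symm }
  have hKclosed : IsClosed (K : Set G) := by
    have hcont : Continuous fun g : G => f (fun _ => g) :=
      hfc.comp (continuous_pi fun _ => continuous_id)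
    exact isClosed_singleton.preimage hcont
  have h1 : Subgroup.closure (S : Set G) ≤ K :=
    (Subgroup.closure_le K).mpr (fun s hs => hS0 s hs)
  have h2 : (Subgroup.closure (S : Set G)).topologicalClosure ≤ K :=
    Subgroup.topologicalClosure_minimal _ h1 hKclosed
  rw [hS] at h2
  funext x
  have hx : x = fun _ => x 0 := funext fun i => congrArg x (Subsingleton.elim i 0)
  rw [hx]
  exact h2 (Subgroup.mem_top (x 0))

end Aux

/-- If a profinite group `G` is topologically generated by `d` elements and `M` is a
finite discrete `G`-module admitting a `G`-composition series with all composition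
factors isomorphic to `ℤ/ℓℤ` with trivial `G`-action, then `H^1(G, M)` is finite of
order at most `|M|^d`. -/
theorem statement0 (ℓ : ℕ) (hℓ : ℓ.Prime) (G : Type) [Group G] [TopologicalSpace G]
    [IsTopologicalGroup G] [CompactSpace G] [TotallyDisconnectedSpace G]
    (M : Type) [AddCommGroup M] [Finite M] [TopologicalSpace M] [DiscreteTopology M]
    [DistribMulAction G M] (hact : Continuous fun p : G × M => p.1 • p.2)
    (d : ℕ)
    (hgen : ∃ S : Finset G, S.card ≤ d ∧
      (Subgroup.closure (S : Set G)).topologicalClosure = ⊤)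
    (hcomp : ∃ (n : ℕ) (c : Fin (n + 1) → AddSubgroup M),
      c 0 = ⊥ ∧ c (Fin.last n) = ⊤ ∧
      (∀ (i : Fin (n + 1)) (g : G), ∀ x ∈ c i, g • x ∈ c i) ∧
      ∀ i : Fin n, c i.castSucc ≤ c i.succ ∧
        Nat.card (c i.succ) = ℓ * Nat.card (c i.castSucc) ∧
        ∀ (g : G), ∀ x ∈ c i.succ, g • x - x ∈ c i.castSucc) :
    Finite (contH G M 1) ∧ Nat.card (contH G M 1) ≤ Nat.card M ^ d := by
  obtain ⟨S, hScard, hSdense⟩ := hgen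
  set Z := contCocycles G M 1 with hZ
  let φ : Z → (S → M) := fun f s => (f : (Fin 1 → G) → M) (fun _ => (s : G))
  have hmem : ∀ f : Z, Continuous (f : (Fin 1 → G) → M) ∧ cochainD G M 1 (f : (Fin 1 → G) → M) = 0 := by
    intro f
    have hm : (f : (Fin 1 → G) → M) ∈ contCochains G M 1 ⊓ (cochainD G M 1).ker := f.2
    exact ⟨(AddSubgroup.mem_inf.mp hm).1, (AddSubgroup.mem_inf.mp hm).2⟩
  have hφ : Function.Injective φ := by
    intro f f' hff
    have hsub : ((f - f' : Z) : (Fin 1 → G) → M) = 0 := by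
      apply aux_cocycle_vanish S hSdense
      · exact (hmem (f - f')).1
      · exact (hmem (f - f')).2
      · intro s hs
        have h := congrFun hff ⟨s, hs⟩
        simp only [φ] at h
        show ((f - f' : Z) : (Fin 1 → G) → M) (fun _ => s) = 0
        rw [AddSubgroup.coe_sub]
        simp only [Pi.sub_apply]
        rw [h, sub_self]
    apply Subtype.ext
    have : ((f : (Fin 1 → G) → M) - (f' : (Fin 1 → G) → M)) = 0 := by
      rw [← AddSubgroup.coe_sub]; exact hsub
    exact sub_eq_zero.mp this
  have hfinZ : Finite Z := Finite.of_injective φ hφ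
  have hfin : Finite (contH G M 1) := Quotient.finite _
  refine ⟨hfin, ?_⟩
  have h5 : Nat.card (contH G M 1) ≤ Nat.card Z :=
    Nat.card_le_card_of_surjective
      (QuotientAddGroup.mk' ((contCoboundaries G M 1).addSubgroupOf Z))
      (QuotientAddGroup.mk'_surjective _)
  have h2 : Nat.card Z ≤ Nat.card (S → M) := Nat.card_le_card_of_injective φ hφ
  have h3 : Nat.card (↑S → M) = Nat.card M ^ S.card := by
    rw [Nat.card_fun, Nat.card_eq_finsetCard]
  have hMpos : 1 ≤ Nat.card M := Nat.one_le_iff_ne_zero.mpr (Nat.card_ne_zero.mpr ⟨⟨0⟩, ‹_›⟩)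
  have h4 : Nat.card M ^ S.card ≤ Nat.card M ^ d := Nat.pow_le_pow_right hMpos hScard
  calc Nat.card (contH G M 1) ≤ Nat.card Z := h5
    _ ≤ Nat.card (↑S → M) := h2
    _ = Nat.card M ^ S.card := h3
    _ ≤ Nat.card M ^ d := h4


end
end

section
/- Let G be a profinite group whose Galois-theoretic ℓ-part is either a finite cyclic ℓ-group or isomorphic to Z_ℓ, acting continuously on a discrete torsion abelian group M. If the fixed submodule M^G is finite and the quotient M/M_div of M by its maximal divisible subgroup is finite, then H^1(G, M) is finite with |H^1(G, M)| ≤ |M/M_div|, in the Z_ℓ case. -/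
noncomputable section

open scoped TensorProduct


/-- The maximal divisible subgroup of an abelian group: the join of all divisible
subgroups. -/
def maxDivisible (N : Type*) [AddCommGroup N] : AddSubgroup N :=
  sSup {H : AddSubgroup N | ∀ n : ℕ, 0 < n → ∀ x ∈ H, ∃ y ∈ H, n • y = x}


open scoped Pointwise

section Aux

variable {N : Type*} [AddCommGroup N]

/-- The `n`-multiplication hom. -/
def nsmulHom (n : ℕ) : N →+ N where
  toFun x := n • x
  map_zero' := smul_zero n
  map_add' a b := smul_add n a b

theorem maxDivisible_div (n : ℕ) (hn : 0 < n) :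
    ∀ x ∈ maxDivisible N, ∃ y ∈ maxDivisible N, n • y = x := by
  have key : maxDivisible N ≤ (maxDivisible N).map (nsmulHom n) := by
    show sSup _ ≤ _
    refine sSup_le ?_
    intro H hH x hx
    obtain ⟨y, hy, hyx⟩ := hH n hn x hx
    exact AddSubgroup.mem_map.2 ⟨y, (le_sSup hH : H ≤ maxDivisible N) hy, hyx⟩
  intro x hx
  obtain ⟨y, hy, hyx⟩ := AddSubgroup.mem_map.1 (key hx)
  exact ⟨y, hy, hyx⟩

theorem map_maxDivisible_le (σ : N →+ N) : (maxDivisible N).map σ ≤ maxDivisible N := by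
  refine le_sSup ?_
  intro n hn x hx
  obtain ⟨a, ha, rfl⟩ := AddSubgroup.mem_map.1 hx
  obtain ⟨y, hy, hyx⟩ := maxDivisible_div n hn a ha
  exact ⟨σ y, AddSubgroup.mem_map.2 ⟨y, hy, rfl⟩, by rw [← map_nsmul, hyx]⟩

theorem closure_finite (htors : ∀ x : N, IsOfFinAddOrder x) {s : Set N} (hs : s.Finite) :
    (AddSubgroup.closure s : Set N).Finite := by
  refine Set.Finite.induction_on (motive := fun s _ => (AddSubgroup.closure s : Set N).Finite) s hs (by simp [AddSubgroup.closure_empty]) ?_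
  intro a t _ _ ih
  rw [Set.insert_eq, AddSubgroup.closure_union]
  have h1 : (AddSubgroup.closure {a} : Set N).Finite := by
    rw [← AddSubgroup.zmultiples_eq_closure]
    exact (htors a).finite_zmultiples
  have hsub : ((AddSubgroup.closure {a} ⊔ AddSubgroup.closure t : AddSubgroup N) : Set N) ⊆
      (AddSubgroup.closure {a} : Set N) + (AddSubgroup.closure t : Set N) := by
    intro x hx
    obtain ⟨y, hy, z, hz, rfl⟩ := AddSubgroup.mem_sup.1 hx
    exact Set.add_mem_add hy hz
  exact ((h1.add ih).subset hsub)

end Aux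

section CocycleAux

variable {G : Type*} [Group G] {M : Type*} [AddCommGroup M] [DistribMulAction G M]
  [TopologicalSpace M] [IsTopologicalAddGroup M]

theorem cocycle_identity {f : (Fin 1 → G) → M} (hf : cochainD G M 1 f = 0) (a b : G) :
    f (fun _ => a * b) = a • f (fun _ => b) + f (fun _ => a) := by
  have h := congrFun hf (Fin.cons a (fun _ => b))
  have e1 : (fun i : Fin 1 => (Fin.cons a (fun _ => b) : Fin 2 → G) i.succ)
      = fun _ : Fin 1 => b := by
    funext i; simp [Fin.cons_succ]
  have e2 : Fin.contractNth (0 : Fin 2) (· * ·) (Fin.cons a fun _ => b)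
      = fun _ : Fin 1 => a * b := by
    funext k
    rw [Subsingleton.elim k 0]
    simp [Fin.contractNth]
  have e3 : Fin.contractNth (1 : Fin 2) (· * ·) (Fin.cons a fun _ => b)
      = fun _ : Fin 1 => a := by
    funext k
    rw [Subsingleton.elim k 0]
    simp [Fin.contractNth]
  simp only [cochainD, AddMonoidHom.coe_mk, ZeroHom.coe_mk, Pi.zero_apply,
    Fin.sum_univ_succ, Fin.sum_univ_zero, Fin.val_succ, Fin.val_zero, Fin.cons_zero,
    Fin.succ_zero_eq_one, e1, e2, e3] at h
  norm_num [pow_succ] at h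
  have h2 : f (fun _ => a * b) - (a • f (fun _ => b) + f (fun _ => a)) = 0 := by
    rw [← neg_eq_zero, ← h]; abel
  exact sub_eq_zero.mp h2

theorem d0_apply (m : M) :
    cochainD G M 0 (fun _ => m) = fun x : Fin 1 → G => x 0 • m - m := by
  funext x
  simp only [cochainD, AddMonoidHom.coe_mk, ZeroHom.coe_mk, Fin.sum_univ_succ,
    Fin.sum_univ_zero, Fin.val_zero]
  norm_num [pow_succ]
  abel

end CocycleAux

/-- If `G ≅ ℤ_ℓ` acts continuously on a discrete torsion abelian group `M` with `M^G`
finite and `M/M_div` finite, then `H^1(G, M)` is finite of order at most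
`|M/M_div|`. -/
theorem statement13 (ℓ : ℕ) [Fact ℓ.Prime] (G : Type) [Group G] [TopologicalSpace G]
    [IsTopologicalGroup G] [CompactSpace G] [TotallyDisconnectedSpace G]
    (e : G ≃* Multiplicative ℤ_[ℓ]) (he : Continuous e) (he' : Continuous e.symm)
    (M : Type) [AddCommGroup M] [TopologicalSpace M] [DiscreteTopology M]
    [DistribMulAction G M] (hact : Continuous fun p : G × M => p.1 • p.2)
    (htors : ∀ x : M, ∃ n : ℕ, 0 < n ∧ n • x = 0)
    (hfix : Finite {x : M // ∀ g : G, g • x = x})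
    (hquot : Finite (M ⧸ maxDivisible M)) :
    Finite (contH G M 1) ∧
      Nat.card (contH G M 1) ≤ Nat.card (M ⧸ maxDivisible M) := by
  classical
  set γ : G := e.symm (Multiplicative.ofAdd (1 : ℤ_[ℓ])) with hγdef
  -- density of powers of γ
  have hd : Dense (Set.range fun k : ℤ => γ ^ k) := by
    have h1 : DenseRange ((↑) : ℤ → ℤ_[ℓ]) := PadicInt.denseRange_intCast
    have hse : Function.Surjective (fun z : ℤ_[ℓ] => e.symm (Multiplicative.ofAdd z)) :=
      fun g => ⟨Multiplicative.toAdd (e g), by simp⟩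
    have h2 : DenseRange (fun z : ℤ_[ℓ] => e.symm (Multiplicative.ofAdd z)) :=
      hse.denseRange
    have h3 : DenseRange
        ((fun z : ℤ_[ℓ] => e.symm (Multiplicative.ofAdd z)) ∘ ((↑) : ℤ → ℤ_[ℓ])) :=
      h2.comp h1 (he'.comp continuous_ofAdd)
    have hfe : (fun k : ℤ => γ ^ k)
        = (fun z : ℤ_[ℓ] => e.symm (Multiplicative.ofAdd z)) ∘ ((↑) : ℤ → ℤ_[ℓ]) := by
      funext k
      show γ ^ k = e.symm (Multiplicative.ofAdd ((k : ℤ_[ℓ])))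
      rw [hγdef, ← map_zpow]
      congr 1
      rw [← ofAdd_zsmul]
      congr 1
      rw [zsmul_one]
    rw [show (Set.range fun k : ℤ => γ ^ k) = _ from congrArg Set.range hfe]
    exact h3
  -- γ-fixed points are G-fixed
  have hstab : ∀ x : M, γ • x = x → ∀ g : G, g • x = x := by
    intro x hx g
    have hcont : Continuous fun g : G => g • x :=
      hact.comp (continuous_id.prodMk continuous_const)
    have hcl : IsClosed {g : G | g • x = x} := isClosed_eq hcont continuous_const
    have hzpow : ∀ k : ℤ, γ ^ k • x = x := by
      intro k
      induction k using Int.induction_on with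
      | zero => simpa using one_smul G x
      | succ n ihn => rw [zpow_add_one, mul_smul, hx, ihn]
      | pred n ihn =>
        have hinv : γ⁻¹ • x = x := by
          conv_lhs => rw [← hx]
          rw [inv_smul_smul]
        rw [zpow_sub_one, mul_smul, hinv, ihn]
    have hsub : (Set.range fun k : ℤ => γ ^ k) ⊆ {g : G | g • x = x} := by
      rintro _ ⟨k, rfl⟩; exact hzpow k
    have huniv : {g : G | g • x = x} = Set.univ := by
      rw [← hcl.closure_eq]
      exact ((hd.mono hsub).closure_eq)
    exact Set.eq_univ_iff_forall.1 huniv g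
  -- torsion
  have htors' : ∀ x : M, IsOfFinAddOrder x := by
    intro x
    obtain ⟨n, hn, h0⟩ := htors x
    exact isOfFinAddOrder_iff_nsmul_eq_zero.2 ⟨n, hn, h0⟩
  -- the twist endomorphism
  set φ : M →+ M :=
    { toFun := fun m => γ • m - m
      map_zero' := by simp
      map_add' := fun u v => by simp only [smul_add]; abel } with hφdef
  haveI : Nonempty {x : M // ∀ g : G, g • x = x} := ⟨⟨0, fun g => smul_zero g⟩⟩
  set f : ℕ := Nat.card {x : M // ∀ g : G, g • x = x} with hfdef
  -- main divisibility step
  have hmain : maxDivisible M ≤ φ.range := by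
    intro x hx
    obtain ⟨y, hy, hyx⟩ := maxDivisible_div (Nat.factorial f) (Nat.factorial_pos f) x hx
    set o : Set M := Set.range fun g : G => g • y with hodef
    have ho : o.Finite :=
      (isCompact_range (hact.comp (continuous_id.prodMk continuous_const))).finite
        DiscreteTopology.isDiscrete
    set E : AddSubgroup M := AddSubgroup.closure o with hEdef
    have hEfin : (E : Set M).Finite := closure_finite htors' ho
    haveI hEfin' : Finite E := hEfin.to_subtype
    have hyE : y ∈ E := AddSubgroup.subset_closure ⟨1, one_smul G y⟩
    have hstabE : ∀ m ∈ E, γ • m ∈ E := by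
      intro m hm
      have hmapo : (DistribMulAction.toAddMonoidHom M γ) '' o ⊆ (E : Set M) := by
        rintro _ ⟨_, ⟨g, rfl⟩, rfl⟩
        exact AddSubgroup.subset_closure ⟨γ * g, mul_smul γ g y⟩
      have hle : E.map (DistribMulAction.toAddMonoidHom M γ) ≤ E := by
        rw [hEdef, AddMonoidHom.map_closure]
        exact (AddSubgroup.closure_le E).2 hmapo
      exact hle (AddSubgroup.mem_map.2 ⟨m, hm, rfl⟩)
    have hEdiv : E ≤ maxDivisible M := by
      refine (AddSubgroup.closure_le _).2 ?_
      rintro _ ⟨g, rfl⟩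
      exact map_maxDivisible_le (DistribMulAction.toAddMonoidHom M g)
        (AddSubgroup.mem_map.2 ⟨y, hy, rfl⟩)
    -- restriction of φ to E
    set φE : E →+ E :=
      { toFun := fun m => ⟨γ • (m : M) - (m : M), E.sub_mem (hstabE m m.2) m.2⟩
        map_zero' := by ext; simp
        map_add' := fun u v => by
          ext
          simp only [AddSubgroup.coe_add, smul_add]
          abel } with hφEdef
    haveI : Finite (E ⧸ φE.range) := Quotient.finite _
    set c : ℕ := Nat.card (E ⧸ φE.range) with hcdef
    have hrangepos : 0 < Nat.card φE.range := Nat.card_pos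
    have hcard1 : Nat.card E = Nat.card (E ⧸ φE.range) * Nat.card φE.range :=
      AddSubgroup.card_eq_card_quotient_mul_card_addSubgroup _
    have hcard2 : Nat.card E = Nat.card (E ⧸ φE.ker) * Nat.card φE.ker :=
      AddSubgroup.card_eq_card_quotient_mul_card_addSubgroup _
    have hiso : Nat.card (E ⧸ φE.ker) = Nat.card φE.range :=
      Nat.card_congr (QuotientAddGroup.quotientKerEquivRange φE).toEquiv
    have hc_eq : c = Nat.card φE.ker := by
      have h12 : Nat.card (E ⧸ φE.range) * Nat.card φE.range
          = Nat.card φE.range * Nat.card φE.ker := by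
        rw [← hcard1, hcard2, hiso]
      rw [mul_comm] at h12
      exact Nat.eq_of_mul_eq_mul_left hrangepos h12
    have hker_le : Nat.card φE.ker ≤ f := by
      have hmap : ∀ z : φE.ker, ∀ g : G, g • ((z : E) : M) = ((z : E) : M) := by
        intro z g
        have hz : φE (z : E) = 0 := z.2
        have hz' : γ • ((z : E) : M) - ((z : E) : M) = 0 := congrArg Subtype.val hz
        exact hstab _ (sub_eq_zero.mp hz') g
      rw [hfdef]
      refine Nat.card_le_card_of_injective
        (fun z : φE.ker => ⟨((z : E) : M), hmap z⟩) ?_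
      intro z₁ z₂ h12
      have h13 := congrArg Subtype.val h12
      exact Subtype.ext (Subtype.ext h13)
    have hmem : (c • (⟨y, hyE⟩ : E)) ∈ φE.range := by
      have h0 : (QuotientAddGroup.mk' φE.range) (c • (⟨y, hyE⟩ : E)) = 0 := by
        rw [map_nsmul]
        simpa [hcdef] using (card_nsmul_eq_zero'
          (x := (QuotientAddGroup.mk' φE.range) (⟨y, hyE⟩ : E)))
      exact (QuotientAddGroup.eq_zero_iff _).1 h0
    obtain ⟨w, hw⟩ := hmem
    have hwM : φ ((w : E) : M) = c • y := by
      have h14 := congrArg Subtype.val hw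
      simpa [hφdef, hφEdef] using h14
    have hcpos : 0 < c := Nat.card_pos
    have hcle : c ≤ f := by rw [hc_eq]; exact hker_le
    obtain ⟨d, hd'⟩ := Nat.dvd_factorial hcpos hcle
    refine ⟨d • ((w : E) : M), ?_⟩
    rw [map_nsmul, hwM, ← hyx, hd', smul_smul, mul_comm]
  -- vanishing of cocycles with trivial value at γ
  have hvan : ∀ h : G → M, Continuous h → (∀ a b : G, h (a * b) = a • h b + h a) →
      h γ = 0 → ∀ g : G, h g = 0 := by
    intro h hc hid hγ0 g
    have h1 : h 1 = 0 := by
      have h15 := hid 1 1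
      rw [one_mul, one_smul] at h15
      exact right_eq_add.mp h15
    have hinv : h γ⁻¹ = 0 := by
      have h16 := hid γ⁻¹ γ
      rw [inv_mul_cancel, h1, hγ0, smul_zero, zero_add] at h16
      exact h16.symm
    have hzk : ∀ k : ℤ, h (γ ^ k) = 0 := by
      intro k
      induction k using Int.induction_on with
      | zero => simpa using h1
      | succ n ihn => rw [zpow_add_one, hid, hγ0, smul_zero, zero_add, ihn]
      | pred n ihn => rw [zpow_sub_one, hid, hinv, smul_zero, zero_add, ihn]
    have hcl : IsClosed {g : G | h g = 0} := isClosed_eq hc continuous_const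
    have hsub : (Set.range fun k : ℤ => γ ^ k) ⊆ {g : G | h g = 0} := by
      rintro _ ⟨k, rfl⟩; exact hzk k
    have huniv : {g : G | h g = 0} = Set.univ := by
      rw [← hcl.closure_eq]; exact (hd.mono hsub).closure_eq
    exact Set.eq_univ_iff_forall.1 huniv g
  -- the evaluation map on cocycles
  set Zc : AddSubgroup ((Fin 1 → G) → M) := contCocycles G M 1 with hZdef
  set Bd : AddSubgroup ((Fin 1 → G) → M) := contCoboundaries G M 1 with hBdef
  have hBd_eq : Bd = (contCochains G M 0).map (cochainD G M 0) := rfl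
  set Φ : Zc →+ M :=
    { toFun := fun ff => (ff : (Fin 1 → G) → M) (fun _ => γ)
      map_zero' := rfl
      map_add' := fun u v => rfl } with hΦdef
  set T : AddSubgroup M := φ.range with hTdef
  set χ0 : Zc →+ M ⧸ T := (QuotientAddGroup.mk' T).comp Φ with hχ0def
  have hB0 : ∀ b : Zc, b ∈ Bd.addSubgroupOf Zc → χ0 b = 0 := by
    intro b hb
    have hb' : (b : (Fin 1 → G) → M) ∈ Bd := hb
    rw [hBd_eq] at hb'
    obtain ⟨f0, hf0c, hf0⟩ := AddSubgroup.mem_map.1 hb'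
    set m : M := f0 (fun i => i.elim0) with hmdef
    have hf0' : f0 = fun _ => m := by
      funext u
      rw [hmdef]
      congr 1
      funext i
      exact i.elim0
    have hval : (b : (Fin 1 → G) → M) (fun _ => γ) = γ • m - m := by
      rw [← hf0, hf0', d0_apply]
    rw [hχ0def]
    refine (QuotientAddGroup.eq_zero_iff _).2 ?_
    show (b : (Fin 1 → G) → M) (fun _ => γ) ∈ T
    rw [hval, hTdef]
    exact ⟨m, rfl⟩
  set χ : contH G M 1 →+ M ⧸ T := QuotientAddGroup.lift (Bd.addSubgroupOf Zc) χ0 hB0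
    with hχdef
  have hinj : Function.Injective χ := by
    rw [injective_iff_map_eq_zero]
    intro z hz
    obtain ⟨ff, rfl⟩ := QuotientAddGroup.mk'_surjective (Bd.addSubgroupOf Zc) z
    have hz' : χ0 ff = 0 := by
      rw [hχdef] at hz
      exact hz
    have hT : Φ ff ∈ T := by
      rw [hχ0def] at hz'
      exact (QuotientAddGroup.eq_zero_iff _).1 hz'
    obtain ⟨m, hm⟩ := hT
    have hc1 : Continuous (ff : (Fin 1 → G) → M) := (AddSubgroup.mem_inf.1 ff.2).1
    have hker : cochainD G M 1 (ff : (Fin 1 → G) → M) = 0 := (AddSubgroup.mem_inf.1 ff.2).2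
    set hfun : G → M :=
      fun g => (ff : (Fin 1 → G) → M) (fun _ => g) - (g • m - m) with hfundef
    have hcont2 : Continuous hfun := by
      apply Continuous.sub
      · exact hc1.comp (continuous_pi fun _ => continuous_id)
      · exact ((hact.comp (continuous_id.prodMk continuous_const)).sub continuous_const)
    have hidty : ∀ a b : G, hfun (a * b) = a • hfun b + hfun a := by
      intro a b
      rw [hfundef]
      show (ff : (Fin 1 → G) → M) (fun _ => a * b) - ((a * b) • m - m)
        = a • ((ff : (Fin 1 → G) → M) (fun _ => b) - (b • m - m))
          + ((ff : (Fin 1 → G) → M) (fun _ => a) - (a • m - m))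
      rw [cocycle_identity hker a b, mul_smul, smul_sub, smul_sub]
      abel
    have hγ0 : hfun γ = 0 := by
      rw [hfundef]
      show (ff : (Fin 1 → G) → M) (fun _ => γ) - (γ • m - m) = 0
      have : Φ ff = (ff : (Fin 1 → G) → M) (fun _ => γ) := rfl
      rw [← this, ← hm]
      simp [hφdef]
    have hall : ∀ g : G, (ff : (Fin 1 → G) → M) (fun _ => g) = g • m - m := by
      intro g
      have h17 := hvan hfun hcont2 hidty hγ0 g
      rw [hfundef] at h17
      exact sub_eq_zero.mp h17
    have hffB : (ff : (Fin 1 → G) → M) ∈ Bd := by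
      rw [hBd_eq]
      refine AddSubgroup.mem_map.2 ⟨fun _ => m, continuous_const, ?_⟩
      rw [d0_apply]
      funext x
      rw [← hall (x 0)]
      exact congrArg _ (funext fun i => by rw [Subsingleton.elim i 0])
    exact (QuotientAddGroup.eq_zero_iff ff).2
      ((AddSubgroup.mem_addSubgroupOf).2 hffB)
  -- assembly
  have hDT : maxDivisible M ≤ T := hmain
  set π : (M ⧸ maxDivisible M) →+ (M ⧸ T) :=
    QuotientAddGroup.map (maxDivisible M) T (AddMonoidHom.id M) (fun x hx => hDT hx)
    with hπdef
  have hπs : Function.Surjective π := by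
    intro q
    obtain ⟨x, rfl⟩ := QuotientAddGroup.mk'_surjective T q
    refine ⟨QuotientAddGroup.mk x, ?_⟩
    rw [hπdef]
    rfl
  haveI hFT : Finite (M ⧸ T) := Finite.of_surjective π hπs
  refine ⟨Finite.of_injective χ hinj, ?_⟩
  calc Nat.card (contH G M 1) ≤ Nat.card (M ⧸ T) := Nat.card_le_card_of_injective χ hinj
    _ ≤ Nat.card (M ⧸ maxDivisible M) := Nat.card_le_card_of_surjective π hπs


end
end
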